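/- Let f(x,y,z) = x³y − x²y² + x²z² + xy³ − xyz² − xz³ − y⁴ + y³z − y²z² − yz³ and g(x,y,z) = f(x − 69y − 1389z, y − 64z, z). For each pair (p, y₀) in {(7, 0), (11, 0), (83, 32), (83, 40)}, set F(x,y) = g(x, y + y₀, 1) ∈ ℤ[x,y], and write F = a + a₁x + a₂y + Ax² + Bxy + Cy² + (terms of total degree ≥ 3). Then: p divides a, a₁ and a₂; p² does not divide a; and the quadratic form Ax² + Bxy + Cy² is nondegenerate modulo p, i.e., B² − 4AC is not divisible by p. -/
import Mathlib

open MvPolynomial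

/-- The quartic `f(x,y,z) = x³y − x²y² + x²z² + xy³ − xyz² − xz³ − y⁴ + y³z − y²z² − yz³`. -/
noncomputable def quarticF : MvPolynomial (Fin 3) ℤ :=
  X 0 ^ 3 * X 1 - X 0 ^ 2 * X 1 ^ 2 + X 0 ^ 2 * X 2 ^ 2 + X 0 * X 1 ^ 3
    - X 0 * X 1 * X 2 ^ 2 - X 0 * X 2 ^ 3 - X 1 ^ 4 + X 1 ^ 3 * X 2
    - X 1 ^ 2 * X 2 ^ 2 - X 1 * X 2 ^ 3

/-- The quartic `g(x,y,z) = f(x − 69y − 1389z, y − 64z, z)`. -/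
noncomputable def quarticG : MvPolynomial (Fin 3) ℤ :=
  aeval ![X 0 - 69 * X 1 - 1389 * X 2, X 1 - 64 * X 2, X 2] quarticF

/-- `F(x,y) = g(x, y + y₀, 1) ∈ ℤ[x,y]`, as a polynomial in the two variables `x, y`. -/
noncomputable def Fpoly (y₀ : ℤ) : MvPolynomial (Fin 2) ℤ :=
  aeval ![X 0, X 1 + C y₀, 1] quarticG

lemma coeff_mono (a b i j : ℕ) (c : ℤ) :
    coeff (Finsupp.single 0 a + Finsupp.single 1 b)
      (monomial (Finsupp.single 0 i + Finsupp.single 1 j) c : MvPolynomial (Fin 2) ℤ)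
      = if i = a ∧ j = b then c else 0 := by
  rw [coeff_monomial]
  congr 1
  simp [Finsupp.ext_iff, Fin.forall_fin_two, Finsupp.single_apply]

lemma Fpoly_eq_0 : Fpoly 0 = (
      monomial (Finsupp.single 0 0 + Finsupp.single 1 0) (163955337238)
      + monomial (Finsupp.single 0 0 + Finsupp.single 1 1) (22343910974)
      + monomial (Finsupp.single 0 0 + Finsupp.single 1 2) (872835917)
      + monomial (Finsupp.single 0 0 + Finsupp.single 1 3) (1615331)
      + monomial (Finsupp.single 0 0 + Finsupp.single 1 4) (-333340)
      + monomial (Finsupp.single 0 1 + Finsupp.single 1 0) (-359315803)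
      + monomial (Finsupp.single 0 1 + Finsupp.single 1 1) (-30793168)
      + monomial (Finsupp.single 0 1 + Finsupp.single 1 2) (-354144)
      + monomial (Finsupp.single 0 1 + Finsupp.single 1 3) (14422)
      + monomial (Finsupp.single 0 2 + Finsupp.single 1 0) (262593)
      + monomial (Finsupp.single 0 2 + Finsupp.single 1 1) (9209)
      + monomial (Finsupp.single 0 2 + Finsupp.single 1 2) (-208)
      + monomial (Finsupp.single 0 3 + Finsupp.single 1 0) (-64)
      + monomial (Finsupp.single 0 3 + Finsupp.single 1 1) (1) : MvPolynomial (Fin 2) ℤ) := by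
  simp only [Fpoly, quarticG, quarticF, map_add, map_sub, map_mul, map_pow, map_one,
    map_ofNat, aeval_X, aeval_C, Matrix.cons_val_zero, Matrix.cons_val_one, Matrix.head_cons,
    Matrix.cons_val_two, Matrix.tail_cons, monomial_single_add, ← C_mul_X_pow_eq_monomial,
    map_zero, C_0, map_neg]
  ring

lemma c_a_0 : coeff (0 : Fin 2 →₀ ℕ) (Fpoly 0) = 163955337238 := by
  rw [show (0 : Fin 2 →₀ ℕ) = (Finsupp.single 0 0 + Finsupp.single 1 0 : Fin 2 →₀ ℕ) by simp]
  rw [Fpoly_eq_0]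
  simp only [coeff_add, coeff_mono]
  norm_num

lemma c_a1_0 : coeff (Finsupp.single 0 1 : Fin 2 →₀ ℕ) (Fpoly 0) = -359315803 := by
  rw [show (Finsupp.single 0 1 : Fin 2 →₀ ℕ) = (Finsupp.single 0 1 + Finsupp.single 1 0 : Fin 2 →₀ ℕ) by simp]
  rw [Fpoly_eq_0]
  simp only [coeff_add, coeff_mono]
  norm_num

lemma c_a2_0 : coeff (Finsupp.single 1 1 : Fin 2 →₀ ℕ) (Fpoly 0) = 22343910974 := by
  rw [show (Finsupp.single 1 1 : Fin 2 →₀ ℕ) = (Finsupp.single 0 0 + Finsupp.single 1 1 : Fin 2 →₀ ℕ) by simp]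
  rw [Fpoly_eq_0]
  simp only [coeff_add, coeff_mono]
  norm_num

lemma c_B_0 : coeff (Finsupp.single 0 1 + Finsupp.single 1 1 : Fin 2 →₀ ℕ) (Fpoly 0) = -30793168 := by
  rw [show (Finsupp.single 0 1 + Finsupp.single 1 1 : Fin 2 →₀ ℕ) = (Finsupp.single 0 1 + Finsupp.single 1 1 : Fin 2 →₀ ℕ) by simp]
  rw [Fpoly_eq_0]
  simp only [coeff_add, coeff_mono]
  norm_num

lemma c_A_0 : coeff (Finsupp.single 0 2 : Fin 2 →₀ ℕ) (Fpoly 0) = 262593 := by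
  rw [show (Finsupp.single 0 2 : Fin 2 →₀ ℕ) = (Finsupp.single 0 2 + Finsupp.single 1 0 : Fin 2 →₀ ℕ) by simp]
  rw [Fpoly_eq_0]
  simp only [coeff_add, coeff_mono]
  norm_num

lemma c_Cc_0 : coeff (Finsupp.single 1 2 : Fin 2 →₀ ℕ) (Fpoly 0) = 872835917 := by
  rw [show (Finsupp.single 1 2 : Fin 2 →₀ ℕ) = (Finsupp.single 0 0 + Finsupp.single 1 2 : Fin 2 →₀ ℕ) by simp]
  rw [Fpoly_eq_0]
  simp only [coeff_add, coeff_mono]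
  norm_num

lemma Fpoly_eq_32 : Fpoly 32 = (
      monomial (Finsupp.single 0 0 + Finsupp.single 1 0) (1476143309782)
      + monomial (Finsupp.single 0 0 + Finsupp.single 1 1) (39476166014)
      + monomial (Finsupp.single 0 0 + Finsupp.single 1 2) (-1020133267)
      + monomial (Finsupp.single 0 0 + Finsupp.single 1 3) (-41052189)
      + monomial (Finsupp.single 0 0 + Finsupp.single 1 4) (-333340)
      + monomial (Finsupp.single 0 1 + Finsupp.single 1 0) (-1234760539)
      + monomial (Finsupp.single 0 1 + Finsupp.single 1 1) (-9154000)
      + monomial (Finsupp.single 0 1 + Finsupp.single 1 2) (1030368)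
      + monomial (Finsupp.single 0 1 + Finsupp.single 1 3) (14422)
      + monomial (Finsupp.single 0 2 + Finsupp.single 1 0) (344289)
      + monomial (Finsupp.single 0 2 + Finsupp.single 1 1) (-4103)
      + monomial (Finsupp.single 0 2 + Finsupp.single 1 2) (-208)
      + monomial (Finsupp.single 0 3 + Finsupp.single 1 0) (-32)
      + monomial (Finsupp.single 0 3 + Finsupp.single 1 1) (1) : MvPolynomial (Fin 2) ℤ) := by
  simp only [Fpoly, quarticG, quarticF, map_add, map_sub, map_mul, map_pow, map_one,
    map_ofNat, aeval_X, aeval_C, Matrix.cons_val_zero, Matrix.cons_val_one, Matrix.head_cons,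
    Matrix.cons_val_two, Matrix.tail_cons, monomial_single_add, ← C_mul_X_pow_eq_monomial,
    map_zero, C_0, map_neg]
  ring

lemma c_a_32 : coeff (0 : Fin 2 →₀ ℕ) (Fpoly 32) = 1476143309782 := by
  rw [show (0 : Fin 2 →₀ ℕ) = (Finsupp.single 0 0 + Finsupp.single 1 0 : Fin 2 →₀ ℕ) by simp]
  rw [Fpoly_eq_32]
  simp only [coeff_add, coeff_mono]
  norm_num

lemma c_a1_32 : coeff (Finsupp.single 0 1 : Fin 2 →₀ ℕ) (Fpoly 32) = -1234760539 := by
  rw [show (Finsupp.single 0 1 : Fin 2 →₀ ℕ) = (Finsupp.single 0 1 + Finsupp.single 1 0 : Fin 2 →₀ ℕ) by simp]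
  rw [Fpoly_eq_32]
  simp only [coeff_add, coeff_mono]
  norm_num

lemma c_a2_32 : coeff (Finsupp.single 1 1 : Fin 2 →₀ ℕ) (Fpoly 32) = 39476166014 := by
  rw [show (Finsupp.single 1 1 : Fin 2 →₀ ℕ) = (Finsupp.single 0 0 + Finsupp.single 1 1 : Fin 2 →₀ ℕ) by simp]
  rw [Fpoly_eq_32]
  simp only [coeff_add, coeff_mono]
  norm_num

lemma c_B_32 : coeff (Finsupp.single 0 1 + Finsupp.single 1 1 : Fin 2 →₀ ℕ) (Fpoly 32) = -9154000 := by
  rw [show (Finsupp.single 0 1 + Finsupp.single 1 1 : Fin 2 →₀ ℕ) = (Finsupp.single 0 1 + Finsupp.single 1 1 : Fin 2 →₀ ℕ) by simp]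
  rw [Fpoly_eq_32]
  simp only [coeff_add, coeff_mono]
  norm_num

lemma c_A_32 : coeff (Finsupp.single 0 2 : Fin 2 →₀ ℕ) (Fpoly 32) = 344289 := by
  rw [show (Finsupp.single 0 2 : Fin 2 →₀ ℕ) = (Finsupp.single 0 2 + Finsupp.single 1 0 : Fin 2 →₀ ℕ) by simp]
  rw [Fpoly_eq_32]
  simp only [coeff_add, coeff_mono]
  norm_num

lemma c_Cc_32 : coeff (Finsupp.single 1 2 : Fin 2 →₀ ℕ) (Fpoly 32) = -1020133267 := by
  rw [show (Finsupp.single 1 2 : Fin 2 →₀ ℕ) = (Finsupp.single 0 0 + Finsupp.single 1 2 : Fin 2 →₀ ℕ) by simp]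
  rw [Fpoly_eq_32]
  simp only [coeff_add, coeff_mono]
  norm_num

lemma Fpoly_eq_40 : Fpoly 40 = (
      monomial (Finsupp.single 0 0 + Finsupp.single 1 0) (1704280027398)
      + monomial (Finsupp.single 0 0 + Finsupp.single 1 1) (14589333134)
      + monomial (Finsupp.single 0 0 + Finsupp.single 1 2) (-2133388363)
      + monomial (Finsupp.single 0 0 + Finsupp.single 1 3) (-51719069)
      + monomial (Finsupp.single 0 0 + Finsupp.single 1 4) (-333340)
      + monomial (Finsupp.single 0 1 + Finsupp.single 1 0) (-1234664923)
      + monomial (Finsupp.single 0 1 + Finsupp.single 1 1) (10100912)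
      + monomial (Finsupp.single 0 1 + Finsupp.single 1 2) (1376496)
      + monomial (Finsupp.single 0 1 + Finsupp.single 1 3) (14422)
      + monomial (Finsupp.single 0 2 + Finsupp.single 1 0) (298153)
      + monomial (Finsupp.single 0 2 + Finsupp.single 1 1) (-7431)
      + monomial (Finsupp.single 0 2 + Finsupp.single 1 2) (-208)
      + monomial (Finsupp.single 0 3 + Finsupp.single 1 0) (-24)
      + monomial (Finsupp.single 0 3 + Finsupp.single 1 1) (1) : MvPolynomial (Fin 2) ℤ) := by
  simp only [Fpoly, quarticG, quarticF, map_add, map_sub, map_mul, map_pow, map_one,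
    map_ofNat, aeval_X, aeval_C, Matrix.cons_val_zero, Matrix.cons_val_one, Matrix.head_cons,
    Matrix.cons_val_two, Matrix.tail_cons, monomial_single_add, ← C_mul_X_pow_eq_monomial,
    map_zero, C_0, map_neg]
  ring

lemma c_a_40 : coeff (0 : Fin 2 →₀ ℕ) (Fpoly 40) = 1704280027398 := by
  rw [show (0 : Fin 2 →₀ ℕ) = (Finsupp.single 0 0 + Finsupp.single 1 0 : Fin 2 →₀ ℕ) by simp]
  rw [Fpoly_eq_40]
  simp only [coeff_add, coeff_mono]
  norm_num

lemma c_a1_40 : coeff (Finsupp.single 0 1 : Fin 2 →₀ ℕ) (Fpoly 40) = -1234664923 := by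
  rw [show (Finsupp.single 0 1 : Fin 2 →₀ ℕ) = (Finsupp.single 0 1 + Finsupp.single 1 0 : Fin 2 →₀ ℕ) by simp]
  rw [Fpoly_eq_40]
  simp only [coeff_add, coeff_mono]
  norm_num

lemma c_a2_40 : coeff (Finsupp.single 1 1 : Fin 2 →₀ ℕ) (Fpoly 40) = 14589333134 := by
  rw [show (Finsupp.single 1 1 : Fin 2 →₀ ℕ) = (Finsupp.single 0 0 + Finsupp.single 1 1 : Fin 2 →₀ ℕ) by simp]
  rw [Fpoly_eq_40]
  simp only [coeff_add, coeff_mono]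
  norm_num

lemma c_B_40 : coeff (Finsupp.single 0 1 + Finsupp.single 1 1 : Fin 2 →₀ ℕ) (Fpoly 40) = 10100912 := by
  rw [show (Finsupp.single 0 1 + Finsupp.single 1 1 : Fin 2 →₀ ℕ) = (Finsupp.single 0 1 + Finsupp.single 1 1 : Fin 2 →₀ ℕ) by simp]
  rw [Fpoly_eq_40]
  simp only [coeff_add, coeff_mono]
  norm_num

lemma c_A_40 : coeff (Finsupp.single 0 2 : Fin 2 →₀ ℕ) (Fpoly 40) = 298153 := by
  rw [show (Finsupp.single 0 2 : Fin 2 →₀ ℕ) = (Finsupp.single 0 2 + Finsupp.single 1 0 : Fin 2 →₀ ℕ) by simp]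
  rw [Fpoly_eq_40]
  simp only [coeff_add, coeff_mono]
  norm_num

lemma c_Cc_40 : coeff (Finsupp.single 1 2 : Fin 2 →₀ ℕ) (Fpoly 40) = -2133388363 := by
  rw [show (Finsupp.single 1 2 : Fin 2 →₀ ℕ) = (Finsupp.single 0 0 + Finsupp.single 1 2 : Fin 2 →₀ ℕ) by simp]
  rw [Fpoly_eq_40]
  simp only [coeff_add, coeff_mono]
  norm_num

/-- For each pair `(p, y₀)` among `(7,0), (11,0), (83,32), (83,40)`, writing
`F(x,y) = g(x, y+y₀, 1) = a + a₁x + a₂y + Ax² + Bxy + Cy² + (higher order)`: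
`p` divides `a`, `a₁`, `a₂`; `p²` does not divide `a`; and the quadratic form
`Ax² + Bxy + Cy²` is nondegenerate mod `p`, i.e. `p ∤ B² − 4AC`. -/
theorem quartic_ordinary_double_points (p y₀ : ℤ)
    (h : (p, y₀) = (7, 0) ∨ (p, y₀) = (11, 0) ∨ (p, y₀) = (83, 32) ∨ (p, y₀) = (83, 40)) :
    (p ∣ coeff 0 (Fpoly y₀) ∧
     p ∣ coeff (Finsupp.single 0 1) (Fpoly y₀) ∧
     p ∣ coeff (Finsupp.single 1 1) (Fpoly y₀)) ∧
    ¬ (p ^ 2 ∣ coeff 0 (Fpoly y₀)) ∧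
    ¬ (p ∣ (coeff (Finsupp.single 0 1 + Finsupp.single 1 1) (Fpoly y₀)) ^ 2
          - 4 * coeff (Finsupp.single 0 2) (Fpoly y₀) * coeff (Finsupp.single 1 2) (Fpoly y₀)) := by
  rcases h with h | h | h | h <;> rw [Prod.mk.injEq] at h <;> obtain ⟨rfl, rfl⟩ := h
  · rw [c_a_0, c_a1_0, c_a2_0, c_B_0, c_A_0, c_Cc_0]
    refine ⟨⟨?_, ?_, ?_⟩, ?_, ?_⟩ <;> decide
  · rw [c_a_0, c_a1_0, c_a2_0, c_B_0, c_A_0, c_Cc_0]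
    refine ⟨⟨?_, ?_, ?_⟩, ?_, ?_⟩ <;> decide
  · rw [c_a_32, c_a1_32, c_a2_32, c_B_32, c_A_32, c_Cc_32]
    refine ⟨⟨?_, ?_, ?_⟩, ?_, ?_⟩ <;> decide
  · rw [c_a_40, c_a1_40, c_a2_40, c_B_40, c_A_40, c_Cc_40]
    refine ⟨⟨?_, ?_, ?_⟩, ?_, ?_⟩ <;> decide
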